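/- arXiv:2409.12918 — 3 statements merged into one kernel-verified Lean document; each statement's English description precedes it below -/
import Mathlib

section
/- Let E be a Banach space and B : E × E → E a bilinear map satisfying ‖B(e,f)‖_E ≤ C_B‖e‖_E‖f‖_E for all e, f ∈ E, where C_B > 0. If e₀ ∈ E satisfies ‖e₀‖_E ≤ ε for some ε with ε ≤ (4C_B)⁻¹, then there exists e ∈ E with e = e₀ − B(e,e) and ‖e‖_E ≤ 2ε, and this solution is unique among all elements of E of norm at most 2ε. -/
/-!
With `r = 2ε` and `C_B r ≤ 1/2`, the Picard iterates `u₀ = 0`, `uₙ₊₁ = e₀ - B(uₙ, uₙ)` are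
majorized by the scalar iterates `t₀ = 0`, `tₙ₊₁ = (1 + tₙ²)/2`: `‖uₙ‖ ≤ r tₙ` and
`‖uₙ₊ₖ - uₙ‖ ≤ r (tₙ₊ₖ - tₙ)`, since `B(x,x) - B(y,y) = B(x, x - y) + B(x - y, y)` mirrors
`s² - t² = (s + t)(s - t)`. At `ε = (4C_B)⁻¹` the map is no contraction on the ball of radius `2ε`,
but `tₙ` still increases to `1`, the double fixed point of `t ↦ (1 + t²)/2`, so `(uₙ)` is Cauchy.
The same comparison gives `‖f - uₙ‖ ≤ r (1 - tₙ)` for every solution `f` with `‖f‖ ≤ r`, so all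
such solutions are the limit of `(uₙ)`.
-/

open Filter Topology

noncomputable def quadraticMajorant : ℕ → ℝ
  | 0 => 0
  | n + 1 => (1 + quadraticMajorant n ^ 2) / 2

namespace quadraticMajorant

theorem succ (n : ℕ) : quadraticMajorant (n + 1) = (1 + quadraticMajorant n ^ 2) / 2 := rfl

theorem nonneg : ∀ n, 0 ≤ quadraticMajorant n
  | 0 => le_rfl
  | n + 1 => by rw [succ]; positivity

theorem le_one : ∀ n, quadraticMajorant n ≤ 1
  | 0 => zero_le_one
  | n + 1 => by
    have := le_one n
    have := nonneg n
    rw [succ]; nlinarith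

theorem monotone : Monotone quadraticMajorant :=
  monotone_nat_of_le_succ fun n => by
    rw [succ]; nlinarith [sq_nonneg (1 - quadraticMajorant n)]

theorem tendsto_one : Tendsto quadraticMajorant atTop (𝓝 1) := by
  obtain ⟨L, hL⟩ : ∃ L, Tendsto quadraticMajorant atTop (𝓝 L) :=
    ⟨_, tendsto_atTop_ciSup monotone ⟨1, Set.forall_mem_range.2 le_one⟩⟩
  have hfix : L = (1 + L ^ 2) / 2 :=
    tendsto_nhds_unique (hL.comp (tendsto_add_atTop_nat 1)) (((hL.pow 2).const_add 1).div_const 2)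
  have hL1 : L = 1 := by nlinarith [sq_nonneg (L - 1)]
  rwa [hL1] at hL

end quadraticMajorant

section Bilinear

variable {R E F : Type*} [CommSemiring R] [NormedAddCommGroup E] [NormedAddCommGroup F]
  [Module R E] [Module R F] {B : E →ₗ[R] E →ₗ[R] F} {C : ℝ}

theorem norm_apply_self_sub_apply_self_le (hB : ∀ e f : E, ‖B e f‖ ≤ C * ‖e‖ * ‖f‖) (x y : E) :
    ‖B x x - B y y‖ ≤ C * (‖x‖ + ‖y‖) * ‖x - y‖ := by
  have hsplit : B x x - B y y = B x (x - y) + B (x - y) y := by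
    simp only [map_sub, LinearMap.sub_apply]
    abel
  calc ‖B x x - B y y‖ ≤ ‖B x (x - y)‖ + ‖B (x - y) y‖ := hsplit ▸ norm_add_le _ _
    _ ≤ C * ‖x‖ * ‖x - y‖ + C * ‖x - y‖ * ‖y‖ := add_le_add (hB _ _) (hB _ _)
    _ = C * (‖x‖ + ‖y‖) * ‖x - y‖ := by ring

theorem Filter.Tendsto.bilin_diag (hB : ∀ e f : E, ‖B e f‖ ≤ C * ‖e‖ * ‖f‖) {α : Type*}
    {l : Filter α} {u : α → E} {e : E} (hu : Tendsto u l (𝓝 e)) :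
    Tendsto (fun a => B (u a) (u a)) l (𝓝 (B e e)) := by
  have hdist : Tendsto (fun a => ‖u a - e‖) l (𝓝 0) := tendsto_iff_norm_sub_tendsto_zero.1 hu
  have hbound : Tendsto (fun a => C * (‖u a‖ + ‖e‖) * ‖u a - e‖) l (𝓝 0) := by
    simpa using ((hu.norm.add tendsto_const_nhds).const_mul C).mul hdist
  exact tendsto_iff_norm_sub_tendsto_zero.2 <|
    squeeze_zero (fun _ => norm_nonneg _) (fun a => norm_apply_self_sub_apply_self_le hB _ _) hbound

theorem norm_apply_self_sub_apply_self_le_of_majorant (hB : ∀ e f : E, ‖B e f‖ ≤ C * ‖e‖ * ‖f‖)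
    (hC : 0 ≤ C) {r s t : ℝ} (hr : 0 ≤ r) (hCr : 2 * C * r ≤ 1) {x y : E}
    (hx : ‖x‖ ≤ r * s) (hy : ‖y‖ ≤ r * t) (hxy : ‖x - y‖ ≤ r * (s - t)) :
    ‖B x x - B y y‖ ≤ r * ((s ^ 2 - t ^ 2) / 2) := by
  have hsum : 0 ≤ r * s + r * t := by linarith [norm_nonneg x, norm_nonneg y]
  have hdiff : 0 ≤ r * (s - t) := (norm_nonneg _).trans hxy
  have hprod : 0 ≤ (r * s + r * t) * (s - t) := by
    rcases hr.eq_or_lt with rfl | hr0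
    · simp
    · exact mul_nonneg hsum ((mul_nonneg_iff_of_pos_left hr0).1 hdiff)
  calc ‖B x x - B y y‖ ≤ C * (‖x‖ + ‖y‖) * ‖x - y‖ := norm_apply_self_sub_apply_self_le hB x y
    _ ≤ C * (r * s + r * t) * (r * (s - t)) := by gcongr
    _ = (2 * C * r) * ((r * s + r * t) * (s - t) / 2) := by ring
    _ ≤ (r * s + r * t) * (s - t) / 2 := mul_le_of_le_one_left (by positivity) hCr
    _ = r * ((s ^ 2 - t ^ 2) / 2) := by ring

end Bilinear

section Iteration

variable {R E : Type*} [CommSemiring R] [NormedAddCommGroup E] [Module R E]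

def quadIterate (B : E →ₗ[R] E →ₗ[R] E) (e₀ : E) (n : ℕ) : E :=
  (fun x => e₀ - B x x)^[n] 0

variable {B : E →ₗ[R] E →ₗ[R] E} {e₀ : E} {C r : ℝ}

@[simp]
theorem quadIterate_zero : quadIterate B e₀ 0 = 0 := rfl

theorem quadIterate_succ (n : ℕ) :
    quadIterate B e₀ (n + 1) = e₀ - B (quadIterate B e₀ n) (quadIterate B e₀ n) :=
  Function.iterate_succ_apply' _ _ _

theorem eq_of_tendsto_quadIterate (hB : ∀ e f : E, ‖B e f‖ ≤ C * ‖e‖ * ‖f‖) {e : E}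
    (he : Tendsto (quadIterate B e₀) atTop (𝓝 e)) : e = e₀ - B e e := by
  refine tendsto_nhds_unique (he.comp (tendsto_add_atTop_nat 1)) ?_
  simp only [Function.comp_def, quadIterate_succ]
  exact tendsto_const_nhds.sub (he.bilin_diag hB)

theorem norm_quadIterate_le (hB : ∀ e f : E, ‖B e f‖ ≤ C * ‖e‖ * ‖f‖) (hC : 0 ≤ C) (hr : 0 ≤ r)
    (hCr : 2 * C * r ≤ 1) (he₀ : ‖e₀‖ ≤ r / 2) (n : ℕ) :
    ‖quadIterate B e₀ n‖ ≤ r * quadraticMajorant n := by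
  induction n with
  | zero => simp [quadraticMajorant]
  | succ n ih =>
    have hsq : ‖B (quadIterate B e₀ n) (quadIterate B e₀ n)‖ ≤
        r * ((quadraticMajorant n ^ 2 - 0 ^ 2) / 2) := by
      simpa using norm_apply_self_sub_apply_self_le_of_majorant hB hC hr hCr
        (y := 0) (t := 0) ih (by simp) (by simpa using ih)
    calc ‖quadIterate B e₀ (n + 1)‖
        ≤ ‖e₀‖ + ‖B (quadIterate B e₀ n) (quadIterate B e₀ n)‖ := by
          rw [quadIterate_succ]; exact norm_sub_le _ _
      _ ≤ r / 2 + r * ((quadraticMajorant n ^ 2 - 0 ^ 2) / 2) := add_le_add he₀ hsq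
      _ = r * quadraticMajorant (n + 1) := by rw [quadraticMajorant.succ]; ring

theorem norm_quadIterate_add_sub_le (hB : ∀ e f : E, ‖B e f‖ ≤ C * ‖e‖ * ‖f‖) (hC : 0 ≤ C)
    (hr : 0 ≤ r) (hCr : 2 * C * r ≤ 1) (he₀ : ‖e₀‖ ≤ r / 2) (k n : ℕ) :
    ‖quadIterate B e₀ (n + k) - quadIterate B e₀ n‖ ≤
      r * (quadraticMajorant (n + k) - quadraticMajorant n) := by
  induction n with
  | zero => simpa [quadraticMajorant] using norm_quadIterate_le hB hC hr hCr he₀ k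
  | succ n ih =>
    rw [Nat.add_right_comm, quadIterate_succ, quadIterate_succ, sub_sub_sub_cancel_left,
      norm_sub_rev, quadraticMajorant.succ, quadraticMajorant.succ]
    convert norm_apply_self_sub_apply_self_le_of_majorant hB hC hr hCr
      (norm_quadIterate_le hB hC hr hCr he₀ _) (norm_quadIterate_le hB hC hr hCr he₀ _) ih
      using 1
    ring

theorem cauchySeq_quadIterate (hB : ∀ e f : E, ‖B e f‖ ≤ C * ‖e‖ * ‖f‖) (hC : 0 ≤ C)
    (hr : 0 ≤ r) (hCr : 2 * C * r ≤ 1) (he₀ : ‖e₀‖ ≤ r / 2) :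
    CauchySeq (quadIterate B e₀) := by
  have hbound : ∀ N n k, N ≤ n →
      dist (quadIterate B e₀ (n + k)) (quadIterate B e₀ n) ≤ r * (1 - quadraticMajorant N) := by
    intro N n k hN
    rw [dist_eq_norm]
    refine (norm_quadIterate_add_sub_le hB hC hr hCr he₀ k n).trans ?_
    gcongr
    · exact quadraticMajorant.le_one _
    · exact quadraticMajorant.monotone hN
  refine cauchySeq_of_le_tendsto_0 (fun N => r * (1 - quadraticMajorant N)) (fun n m N hn hm => ?_) ?_
  · obtain ⟨k, rfl⟩ | ⟨k, rfl⟩ := (le_total n m).imp Nat.exists_eq_add_of_le Nat.exists_eq_add_of_le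
    · rw [dist_comm]; exact hbound N n k hn
    · exact hbound N m k hm
  · simpa using (quadraticMajorant.tendsto_one.const_sub 1).const_mul r

theorem norm_sub_quadIterate_le (hB : ∀ e f : E, ‖B e f‖ ≤ C * ‖e‖ * ‖f‖) (hC : 0 ≤ C)
    (hr : 0 ≤ r) (hCr : 2 * C * r ≤ 1) (he₀ : ‖e₀‖ ≤ r / 2) {f : E} (hf : f = e₀ - B f f)
    (hfr : ‖f‖ ≤ r) (n : ℕ) :
    ‖f - quadIterate B e₀ n‖ ≤ r * (1 - quadraticMajorant n) := by
  induction n with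
  | zero => simpa [quadraticMajorant] using hfr
  | succ n ih =>
    rw [quadIterate_succ, hf, sub_sub_sub_cancel_left, norm_sub_rev,
      quadraticMajorant.succ]
    convert norm_apply_self_sub_apply_self_le_of_majorant hB hC hr hCr (s := 1)
      (by simpa using hfr) (norm_quadIterate_le hB hC hr hCr he₀ _) ih using 1
    ring

theorem tendsto_quadIterate_of_eq (hB : ∀ e f : E, ‖B e f‖ ≤ C * ‖e‖ * ‖f‖) (hC : 0 ≤ C)
    (hr : 0 ≤ r) (hCr : 2 * C * r ≤ 1) (he₀ : ‖e₀‖ ≤ r / 2) {f : E} (hf : f = e₀ - B f f)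
    (hfr : ‖f‖ ≤ r) : Tendsto (quadIterate B e₀) atTop (𝓝 f) := by
  refine tendsto_iff_norm_sub_tendsto_zero.2 <| squeeze_zero (fun _ => norm_nonneg _)
    (fun n => (norm_sub_rev _ _).trans_le (norm_sub_quadIterate_le hB hC hr hCr he₀ hf hfr n)) ?_
  simpa using (quadraticMajorant.tendsto_one.const_sub 1).const_mul r

end Iteration

theorem fixed_point_quadratic_general
    {E : Type*} [NormedAddCommGroup E] [NormedSpace ℝ E] [CompleteSpace E]
    (B : E →ₗ[ℝ] E →ₗ[ℝ] E) (C_B : ℝ)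
    (hB : ∀ e f : E, ‖B e f‖ ≤ C_B * ‖e‖ * ‖f‖)
    (e₀ : E) (ε : ℝ) (hε : ε ≤ (4 * C_B)⁻¹) (he₀ : ‖e₀‖ ≤ ε) :
    ∃! e : E, e = e₀ - B e e ∧ ‖e‖ ≤ 2 * ε := by
  have hε0 : 0 ≤ ε := (norm_nonneg e₀).trans he₀
  have hC : 0 ≤ C_B := by
    by_contra! hneg
    linarith [inv_neg''.2 (by linarith : 4 * C_B < 0)]
  have hr : 0 ≤ 2 * ε := by linarith
  have hCr : 2 * C_B * (2 * ε) ≤ 1 :=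
    calc 2 * C_B * (2 * ε) = 4 * C_B * ε := by ring
      _ ≤ 4 * C_B * (4 * C_B)⁻¹ := by gcongr
      _ ≤ 1 := mul_inv_le_one
  have he₀' : ‖e₀‖ ≤ 2 * ε / 2 := by linarith
  obtain ⟨e, he⟩ := cauchySeq_tendsto_of_complete (cauchySeq_quadIterate hB hC hr hCr he₀')
  have hnorm : ‖e‖ ≤ 2 * ε := le_of_tendsto' he.norm fun n =>
    (norm_quadIterate_le hB hC hr hCr he₀' n).trans
      (mul_le_of_le_one_right hr (quadraticMajorant.le_one n))
  refine ⟨e, ⟨eq_of_tendsto_quadIterate hB he, hnorm⟩, fun f ⟨hf, hfr⟩ => ?_⟩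
  exact tendsto_nhds_unique (tendsto_quadIterate_of_eq hB hC hr hCr he₀' hf hfr) he

/-- **Fixed point theorem for a quadratic equation in a Banach space.**
If `B` is a bounded bilinear map on a Banach space `E` with bound `C_B > 0`,
and `‖e₀‖ ≤ ε ≤ (4 C_B)⁻¹`, then the equation `e = e₀ - B e e` has a solution with
`‖e‖ ≤ 2 ε`, unique among elements of norm at most `2 ε`. -/
theorem fixed_point_quadratic
    {E : Type*} [NormedAddCommGroup E] [NormedSpace ℝ E] [CompleteSpace E]
    (B : E →ₗ[ℝ] E →ₗ[ℝ] E) (C_B : ℝ) (hC : 0 < C_B)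
    (hB : ∀ e f : E, ‖B e f‖ ≤ C_B * ‖e‖ * ‖f‖)
    (e₀ : E) (ε : ℝ) (hε : ε ≤ (4 * C_B)⁻¹) (he₀ : ‖e₀‖ ≤ ε) :
    ∃! e : E, e = e₀ - B e e ∧ ‖e‖ ≤ 2 * ε :=
  fixed_point_quadratic_general B C_B hB e₀ ε hε he₀
end

section
/- Let E be a Banach space, B : E × E → E a bilinear map with ‖B(e,f)‖_E ≤ C_B‖e‖_E‖f‖_E for all e, f ∈ E and C_B ≥ 1, let e₀ ∈ E, and let U ∈ E satisfy ‖B(e,U)‖_E + ‖B(U,e)‖_E ≤ (1/8)‖e‖_E for all e ∈ E. If e and f both satisfy the equation x = e₀ − B(x,x) − B(U,x) − B(x,U), with ‖e‖_E ≤ 3/(8C_B) and ‖f‖_E ≤ 7/(16C_B), then e = f. -/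
/-!
Subtracting the equations for two solutions `e` and `f` expresses `e - f` through
`B f f - B e e = B (f - e) f + B e (f - e)` and the `U`-terms, which gives
`‖e - f‖ ≤ (C_B (‖e‖ + ‖f‖) + 1/8) ‖e - f‖`. Under the size constraints the factor is at most
`3/8 + 7/16 + 1/8 = 15/16 < 1`, so `e - f = 0`.
-/

namespace LinearMap

variable {R E F : Type*} [CommRing R] [SeminormedAddCommGroup E] [Module R E]
  [SeminormedAddCommGroup F] [Module R F]

theorem apply_self_sub_apply_self (B : E →ₗ[R] E →ₗ[R] F) (x y : E) :
    B x x - B y y = B (x - y) x + B y (x - y) := by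
  simp only [map_sub, sub_apply]
  abel

theorem norm_apply_self_sub_apply_self_le (B : E →ₗ[R] E →ₗ[R] F) {C : ℝ}
    (hB : ∀ x y : E, ‖B x y‖ ≤ C * ‖x‖ * ‖y‖) (x y : E) :
    ‖B x x - B y y‖ ≤ C * (‖x‖ + ‖y‖) * ‖x - y‖ := by
  rw [apply_self_sub_apply_self]
  calc ‖B (x - y) x + B y (x - y)‖ ≤ ‖B (x - y) x‖ + ‖B y (x - y)‖ := norm_add_le _ _
    _ ≤ C * ‖x - y‖ * ‖x‖ + C * ‖y‖ * ‖x - y‖ := add_le_add (hB _ _) (hB _ _)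
    _ = C * (‖x‖ + ‖y‖) * ‖x - y‖ := by ring

end LinearMap

section PerturbedQuadratic

variable {R E : Type*} [CommRing R] [SeminormedAddCommGroup E] [Module R E]
  (B : E →ₗ[R] E →ₗ[R] E) (e₀ U : E)

theorem sub_eq_of_perturbed_quadratic_eq {e f : E}
    (he : e = e₀ - B e e - B U e - B e U) (hf : f = e₀ - B f f - B U f - B f U) :
    e - f = (B f f - B e e) + (B U (f - e) + B (f - e) U) := by
  conv_lhs => rw [he, hf]
  simp only [map_sub, LinearMap.sub_apply]
  abel

theorem norm_sub_le_of_perturbed_quadratic_eq {C κ : ℝ}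
    (hB : ∀ x y : E, ‖B x y‖ ≤ C * ‖x‖ * ‖y‖) (hU : ∀ x : E, ‖B x U‖ + ‖B U x‖ ≤ κ * ‖x‖)
    {e f : E} (he : e = e₀ - B e e - B U e - B e U) (hf : f = e₀ - B f f - B U f - B f U) :
    ‖e - f‖ ≤ (C * (‖e‖ + ‖f‖) + κ) * ‖e - f‖ := by
  have hquad := B.norm_apply_self_sub_apply_self_le hB f e
  have hlin := hU (f - e)
  calc ‖e - f‖ = ‖(B f f - B e e) + (B U (f - e) + B (f - e) U)‖ := by
        rw [sub_eq_of_perturbed_quadratic_eq B e₀ U he hf]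
    _ ≤ ‖B f f - B e e‖ + (‖B U (f - e)‖ + ‖B (f - e) U‖) :=
        norm_add_le_of_le le_rfl (norm_add_le _ _)
    _ ≤ (C * (‖e‖ + ‖f‖) + κ) * ‖f - e‖ := by linarith
    _ = (C * (‖e‖ + ‖f‖) + κ) * ‖e - f‖ := by rw [norm_sub_rev]

end PerturbedQuadratic

theorem eq_of_norm_sub_le_mul_norm_sub {E : Type*} [NormedAddCommGroup E] {x y : E} {q : ℝ}
    (hq : q < 1) (h : ‖x - y‖ ≤ q * ‖x - y‖) : x = y := by
  have hnorm : ‖x - y‖ ≤ 0 := by nlinarith [norm_nonneg (x - y)]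
  exact sub_eq_zero.mp (norm_le_zero_iff.mp hnorm)

theorem perturbed_solution_unique_general
    {E : Type*} [NormedAddCommGroup E] [NormedSpace ℝ E]
    (B : E →ₗ[ℝ] E →ₗ[ℝ] E) (C_B : ℝ) (hC : 1 ≤ C_B)
    (hB : ∀ e f : E, ‖B e f‖ ≤ C_B * ‖e‖ * ‖f‖)
    (e₀ U : E) (hU : ∀ e : E, ‖B e U‖ + ‖B U e‖ ≤ (1 / 8) * ‖e‖)
    (e f : E)
    (he : e = e₀ - B e e - B U e - B e U)
    (hf : f = e₀ - B f f - B U f - B f U)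
    (hebd : ‖e‖ ≤ 3 / (8 * C_B)) (hfbd : ‖f‖ ≤ 7 / (16 * C_B)) :
    e = f := by
  have hCpos : 0 < C_B := by linarith
  rw [le_div_iff₀ (by positivity)] at hebd hfbd
  refine eq_of_norm_sub_le_mul_norm_sub (q := C_B * (‖e‖ + ‖f‖) + 1 / 8) ?_
    (norm_sub_le_of_perturbed_quadratic_eq B e₀ U hB hU he hf)
  linarith

/-- **Uniqueness of small solutions of the perturbed quadratic equation.**
Let `B` be a bounded bilinear map on a Banach space `E` with bound `C_B ≥ 1`, and let `U`
satisfy `‖B e U‖ + ‖B U e‖ ≤ (1/8) ‖e‖` for all `e`. If `e` and `f` both satisfy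
`x = e₀ - B x x - B U x - B x U`, with `‖e‖ ≤ 3/(8 C_B)` and `‖f‖ ≤ 7/(16 C_B)`,
then `e = f`. -/
theorem perturbed_solution_unique
    {E : Type*} [NormedAddCommGroup E] [NormedSpace ℝ E] [CompleteSpace E]
    (B : E →ₗ[ℝ] E →ₗ[ℝ] E) (C_B : ℝ) (hC : 1 ≤ C_B)
    (hB : ∀ e f : E, ‖B e f‖ ≤ C_B * ‖e‖ * ‖f‖)
    (e₀ U : E) (hU : ∀ e : E, ‖B e U‖ + ‖B U e‖ ≤ (1 / 8) * ‖e‖)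
    (e f : E)
    (he : e = e₀ - B e e - B U e - B e U)
    (hf : f = e₀ - B f f - B U f - B f U)
    (hebd : ‖e‖ ≤ 3 / (8 * C_B)) (hfbd : ‖f‖ ≤ 7 / (16 * C_B)) :
    e = f :=
  perturbed_solution_unique_general B C_B hC hB e₀ U hU e f he hf hebd hfbd
end

section
/- Let λ > 1 and let u₀ : ℝ³ → ℝ³ be a measurable function that is λ-discretely self-similar, i.e. u₀(x) = λ u₀(λx) for almost every x ∈ ℝ³. Then ‖u₀‖³_{L^{3,∞}(ℝ³)} ≤ (λ³/(3(λ−1))) ∫_{{x : 1 ≤ |x| ≤ λ}} |u₀(x)|³ dx. In particular, a λ-DSS vector field belongs to L^{3,∞}(ℝ³) if and only if it belongs to L³ of the annulus {1 ≤ |x| ≤ λ}. -/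
/-! The shells `λ ^ z • A` (`z : ℤ`) of the annulus `A = {1 ≤ ‖x‖ < λ}` partition `ℝ³ \ {0}`, and
self-similarity maps the part of the level set `{‖u₀‖ > β}` lying in `λ ^ z • A` onto `λ ^ (3 z)`
times the part of `{‖u₀‖ > β λ ^ z}` lying in `A`. Summing over `z` gives the exact identity
`β³ |{‖u₀‖ > β}| = ∫_A ∑_z (β λ^z)³ 1{β λ^z < ‖u₀‖}`. For every `v > 0` the geometric sum
`∑_{β λ^z < v} (β λ^z)³` lies between `λ⁻³ v³` and `λ³ v³ / (λ³ - 1) ≤ λ³ v³ / (3 (λ - 1))`: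
the upper bound yields the weak-`L³` estimate, the lower bound with `β = 1` yields
`∫_A ‖u₀‖³ ≤ λ³ |{‖u₀‖ > 1}|` and hence the converse. -/

open MeasureTheory
open scoped ENNReal

/-- The weak-`L³` (Lorentz `L^{3,∞}`) quasinorm of a vector field on `ℝ³`:
`‖f‖_{L^{3,∞}} = sup_{α > 0} α · |{x : |f x| > α}|^{1/3}` (Lebesgue measure). -/
noncomputable def weakL3Norm (f : EuclideanSpace ℝ (Fin 3) → EuclideanSpace ℝ (Fin 3)) :
    ℝ≥0∞ :=
  ⨆ (α : ℝ) (_ : 0 < α), ENNReal.ofReal α * volume {x | α < ‖f x‖} ^ ((1 : ℝ) / 3)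

open Set Metric Module
open scoped Pointwise

noncomputable def zpowLayerSum (lam β : ℝ) (d : ℕ) (v : ℝ) : ℝ≥0∞ :=
  ∑' z : ℤ, (Ioi (β * lam ^ z)).indicator (fun _ => ENNReal.ofReal (β * lam ^ z) ^ d) v

section zpowLayerSum

variable {lam β v : ℝ}

lemma exists_zpow_layer (hlam : 1 < lam) (hβ : 0 < β) (hv : 0 < v) :
    ∃ z₀ : ℤ, v ≤ β * lam ^ (z₀ + 1) ∧ ∀ z : ℤ, β * lam ^ z < v ↔ z ≤ z₀ := by
  obtain ⟨z₀, hlow, hup⟩ := exists_mem_Ioc_zpow (div_pos hv hβ) hlam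
  rw [lt_div_iff₀' hβ] at hlow
  rw [div_le_iff₀' hβ] at hup
  refine ⟨z₀, hup, fun z => ⟨fun h => ?_, fun h => ?_⟩⟩
  · have := (mul_lt_mul_iff_right₀ hβ).1 (h.trans_le hup)
    exact Int.lt_add_one_iff.1 ((zpow_lt_zpow_iff_right₀ hlam).1 this)
  · exact lt_of_le_of_lt (mul_le_mul_of_nonneg_left
      ((zpow_le_zpow_iff_right₀ hlam).2 h) hβ.le) hlow

lemma ofReal_pow_le_zpowLayerSum (hlam : 1 < lam) (hβ : 0 < β) {d : ℕ} (hd : d ≠ 0) (v : ℝ) :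
    ENNReal.ofReal v ^ d ≤ ENNReal.ofReal lam ^ d * zpowLayerSum lam β d v := by
  rcases le_or_gt v 0 with hv | hv
  · simp [ENNReal.ofReal_of_nonpos hv, zero_pow hd]
  obtain ⟨z₀, hup, hlayer⟩ := exists_zpow_layer hlam hβ hv
  calc ENNReal.ofReal v ^ d
      ≤ ENNReal.ofReal (lam * (β * lam ^ z₀)) ^ d := by
        gcongr
        rw [zpow_add_one₀ (by positivity)] at hup
        linarith
    _ = ENNReal.ofReal lam ^ d *
          (Ioi (β * lam ^ z₀)).indicator (fun _ => ENNReal.ofReal (β * lam ^ z₀) ^ d) v := by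
        rw [indicator_of_mem (mem_Ioi.2 ((hlayer z₀).2 le_rfl)),
          ENNReal.ofReal_mul (by positivity), mul_pow]
    _ ≤ ENNReal.ofReal lam ^ d * zpowLayerSum lam β d v := by
        gcongr
        exact ENNReal.le_tsum z₀

lemma zpowLayerSum_le (hlam : 1 < lam) (hβ : 0 < β) (d : ℕ) (v : ℝ) :
    zpowLayerSum lam β d v ≤ (1 - (ENNReal.ofReal lam)⁻¹ ^ d)⁻¹ * ENNReal.ofReal v ^ d := by
  rcases le_or_gt v 0 with hv | hv
  · have hzero : ∀ z : ℤ, v ∉ Ioi (β * lam ^ z) := fun z h =>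
      (mem_Ioi.1 h).not_ge (hv.trans (by positivity))
    simp [zpowLayerSum, indicator_of_notMem (hzero _)]
  obtain ⟨z₀, -, hlayer⟩ := exists_zpow_layer hlam hβ hv
  have hl0 : 0 < lam := one_pos.trans hlam
  -- the terms below `z₀` form a geometric series of ratio `lam⁻¹ ^ d`, reindexed by `n = z₀ - z`
  have hsupp : Function.support (fun z : ℤ =>
      (Ioi (β * lam ^ z)).indicator (fun _ => ENNReal.ofReal (β * lam ^ z) ^ d) v)
      ⊆ range (fun n : ℕ => z₀ - n) := by
    intro z hz
    have hz₀ : z ≤ z₀ := (hlayer z).1 (by by_contra h; exact hz (indicator_of_notMem h _))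
    exact ⟨(z₀ - z).toNat, show z₀ - ((z₀ - z).toNat : ℤ) = z by omega⟩
  have hterm : ∀ n : ℕ, (Ioi (β * lam ^ (z₀ - n))).indicator
      (fun _ => ENNReal.ofReal (β * lam ^ (z₀ - n)) ^ d) v
      = ENNReal.ofReal (β * lam ^ z₀) ^ d * ((ENNReal.ofReal lam)⁻¹ ^ d) ^ n := by
    intro n
    rw [indicator_of_mem (mem_Ioi.2 ((hlayer _).2 (by omega))), zpow_sub₀ hl0.ne', zpow_natCast,
      div_eq_mul_inv, ← mul_assoc, ENNReal.ofReal_mul (by positivity), ← inv_pow,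
      ENNReal.ofReal_pow (by positivity), ENNReal.ofReal_inv_of_pos hl0]
    ring
  have hinj : Function.Injective (fun n : ℕ => z₀ - n) := fun a b h => by simpa using h
  calc zpowLayerSum lam β d v
      = ∑' n : ℕ, ENNReal.ofReal (β * lam ^ z₀) ^ d * ((ENNReal.ofReal lam)⁻¹ ^ d) ^ n := by
        rw [zpowLayerSum, ← hinj.tsum_eq hsupp]
        exact tsum_congr hterm
    _ = (1 - (ENNReal.ofReal lam)⁻¹ ^ d)⁻¹ * ENNReal.ofReal (β * lam ^ z₀) ^ d := by
        rw [ENNReal.tsum_mul_left, ENNReal.tsum_geometric, mul_comm]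
    _ ≤ (1 - (ENNReal.ofReal lam)⁻¹ ^ d)⁻¹ * ENNReal.ofReal v ^ d := by
        gcongr
        exact ((hlayer z₀).2 le_rfl).le

lemma one_sub_inv_pow_inv_le (hlam : 1 < lam) {d : ℕ} (hd : d ≠ 0) :
    (1 - (ENNReal.ofReal lam)⁻¹ ^ d)⁻¹ ≤ ENNReal.ofReal (lam ^ d / (d * (lam - 1))) := by
  have hl0 : 0 < lam := one_pos.trans hlam
  have hpow : 1 < lam ^ d := one_lt_pow₀ hlam hd
  have hbern : d * (lam - 1) ≤ lam ^ d - 1 := by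
    have := one_add_mul_le_pow (a := lam - 1) (by linarith) d
    simp only [add_sub_cancel] at this
    linarith
  rw [← ENNReal.ofReal_inv_of_pos hl0, ← ENNReal.ofReal_pow (by positivity), ← ENNReal.ofReal_one,
    ← ENNReal.ofReal_sub _ (by positivity), ← ENNReal.ofReal_inv_of_pos (by
      rw [sub_pos, inv_pow]; exact inv_lt_one_of_one_lt₀ hpow)]
  apply ENNReal.ofReal_le_ofReal
  have hd' : (0 : ℝ) < d * (lam - 1) := by
    have : (0:ℝ) < d := by exact_mod_cast Nat.pos_of_ne_zero hd
    nlinarith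
  rw [inv_pow, ← one_div (lam ^ d), one_sub_div (by positivity), inv_div]
  exact div_le_div_of_nonneg_left (by positivity) hd' hbern

end zpowLayerSum

lemma smul_ball_sdiff_ball {E : Type*} [NormedAddCommGroup E] [NormedSpace ℝ E] {c : ℝ}
    (hc : 0 < c) (r R : ℝ) :
    c • (ball (0 : E) R \ ball 0 r) = (‖·‖) ⁻¹' Ico (c * r) (c * R) := by
  ext x
  simp [smul_set_sdiff₀ hc.ne', _root_.smul_ball hc.ne', Real.norm_of_nonneg hc.le, and_comm]

section SelfSimilar

variable {E F : Type*} [NormedAddCommGroup E] [NormedSpace ℝ E] [FiniteDimensional ℝ E]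
  [MeasurableSpace E] [BorelSpace E] [NormedAddCommGroup F] [NormedSpace ℝ F]
  (μ : Measure E) [μ.IsAddHaarMeasure] {lam : ℝ} {u : E → F}

def IsDiscretelySelfSimilar (μ : Measure E) (lam : ℝ) (u : E → F) : Prop :=
  ∀ᵐ x ∂μ, u x = lam • u (lam • x)

variable {μ} in
lemma IsDiscretelySelfSimilar.zpow (hu : IsDiscretelySelfSimilar μ lam u) (hlam : lam ≠ 0)
    (z : ℤ) : ∀ᵐ x ∂μ, u x = lam ^ z • u (lam ^ z • x) := by
  have hscaled (z : ℤ) : ∀ᵐ x ∂μ, u (lam ^ z • x) = lam • u (lam • lam ^ z • x) :=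
    (Measure.quasiMeasurePreserving_smul μ (zpow_ne_zero z hlam)).ae hu
  induction z using Int.induction_on with
  | zero => simp
  | succ i ih =>
    filter_upwards [ih, hscaled i] with x hx hx'
    rw [hx, hx', smul_smul, smul_smul, ← zpow_add_one₀ hlam, mul_comm lam, ← zpow_add_one₀ hlam]
  | pred i ih =>
    filter_upwards [ih, hscaled (-i - 1)] with x hx hx'
    rwa [hx', smul_smul, smul_smul, ← zpow_add_one₀ hlam, ← zpow_one_add₀ hlam, sub_add_cancel,
      add_sub_cancel]

lemma measure_setOf_lt_norm_inter_smul {c : ℝ} (hc : 0 < c)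
    (h : ∀ᵐ x ∂μ, u x = c • u (c • x)) (α : ℝ) (W : Set E) :
    μ ({x | α < ‖u x‖} ∩ c • W) =
      ENNReal.ofReal c ^ finrank ℝ E * μ ({x | α * c < ‖u x‖} ∩ W) := by
  have hsmul : {x | α < ‖u x‖} ∩ c • W = c • ({y | α < ‖u (c • y)‖} ∩ W) := by
    ext x
    simp [mem_smul_set_iff_inv_smul_mem₀ hc.ne', smul_inv_smul₀ hc.ne']
  have hlevel : {y | α < ‖u (c • y)‖} =ᵐ[μ] {y | α * c < ‖u y‖} := by
    filter_upwards [h] with y hy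
    refine propext ?_
    change α < _ ↔ α * c < _
    rw [hy, norm_smul, Real.norm_of_nonneg hc.le, mul_comm c, mul_lt_mul_iff_left₀ hc]
  rw [hsmul, Measure.addHaar_smul_of_nonneg μ hc.le, ENNReal.ofReal_pow hc.le,
    measure_congr (hlevel.inter (ae_eq_refl W))]

variable [Nontrivial E]

lemma measure_eq_tsum_inter_zpow_smul_annulus (hlam : 1 < lam) {s : Set E}
    (hs : MeasurableSet s) :
    μ s = ∑' z : ℤ, μ (s ∩ lam ^ z • (ball (0 : E) lam \ ball 0 1)) := by
  have hl0 : 0 < lam := one_pos.trans hlam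
  have hshell (z : ℤ) : lam ^ z • (ball (0 : E) lam \ ball 0 1) =
      (‖·‖) ⁻¹' Ico (lam ^ z) (lam ^ (z + 1)) := by
    rw [smul_ball_sdiff_ball (zpow_pos hl0 z), mul_one, zpow_add_one₀ hl0.ne']
  have hunion : s \ {0} = ⋃ z : ℤ, s ∩ lam ^ z • (ball (0 : E) lam \ ball 0 1) := by
    ext x
    simp only [hshell, mem_sdiff, mem_singleton_iff, mem_iUnion, mem_inter_iff, mem_preimage]
    constructor
    · rintro ⟨hxs, hx⟩
      obtain ⟨z, hz⟩ := exists_mem_Ico_zpow (norm_pos_iff.2 hx) hlam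
      exact ⟨z, hxs, hz⟩
    · rintro ⟨z, hxs, hz⟩
      exact ⟨hxs, norm_pos_iff.1 ((zpow_pos hl0 z).trans_le hz.1)⟩
  have hshell_le {i j : ℤ} {t : ℝ} (hi : t ∈ Ico (lam ^ i) (lam ^ (i + 1)))
      (hj : t ∈ Ico (lam ^ j) (lam ^ (j + 1))) : i ≤ j :=
    Int.lt_add_one_iff.1 ((zpow_lt_zpow_iff_right₀ hlam).1 (hi.1.trans_lt hj.2))
  rw [← measure_sdiff_null (measure_singleton 0), hunion, measure_iUnion]
  · intro i j hij
    simp only [Function.onFun, hshell, disjoint_left]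
    rintro x ⟨-, hi⟩ ⟨-, hj⟩
    exact hij (le_antisymm (hshell_le hi hj) (hshell_le hj hi))
  · intro z
    rw [hshell]
    exact hs.inter (measurableSet_Ico.preimage continuous_norm.measurable)

lemma setOf_le_norm_le_ae_eq (r R : ℝ) :
    {x : E | r ≤ ‖x‖ ∧ ‖x‖ ≤ R} =ᵐ[μ] (ball 0 R \ ball 0 r : Set E) := by
  have hclosed : {x : E | r ≤ ‖x‖ ∧ ‖x‖ ≤ R} = closedBall 0 R \ ball 0 r := by
    ext x
    simp [and_comm]
  rw [hclosed]
  exact (ae_eq_of_subset_of_measure_ge ball_subset_closedBall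
    (Measure.addHaar_closedBall_eq_addHaar_ball μ 0 R).le measurableSet_ball.nullMeasurableSet
    measure_closedBall_lt_top.ne).symm.diff (ae_eq_refl _)

variable [MeasurableSpace F] [BorelSpace F]

lemma lintegral_zpowLayerSum (hlam : 1 < lam) (hmeas : Measurable u)
    (hu : IsDiscretelySelfSimilar μ lam u) {β : ℝ} (hβ : 0 < β) :
    ∫⁻ x in ball 0 lam \ ball 0 1, zpowLayerSum lam β (finrank ℝ E) ‖u x‖ ∂μ
      = ENNReal.ofReal β ^ finrank ℝ E * μ {x | β < ‖u x‖} := by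
  have hl0 : 0 < lam := one_pos.trans hlam
  unfold zpowLayerSum
  rw [measure_eq_tsum_inter_zpow_smul_annulus μ hlam
      (measurableSet_lt measurable_const hmeas.norm), ← ENNReal.tsum_mul_left,
    lintegral_tsum fun z => by exact ((measurable_const.indicator measurableSet_Ioi).comp
      hmeas.norm).aemeasurable]
  refine tsum_congr fun z => ?_
  rw [lintegral_indicator_const_comp hmeas.norm measurableSet_Ioi,
    Measure.restrict_apply (measurableSet_Ioi.preimage hmeas.norm),
    measure_setOf_lt_norm_inter_smul μ (zpow_pos hl0 z) (hu.zpow hl0.ne' z),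
    ENNReal.ofReal_mul hβ.le]
  simp only [preimage, mem_Ioi]
  ring

lemma ofReal_pow_mul_measure_le_lintegral_annulus (hlam : 1 < lam) (hmeas : Measurable u)
    (hu : IsDiscretelySelfSimilar μ lam u) {α : ℝ} (hα : 0 < α) :
    ENNReal.ofReal α ^ finrank ℝ E * μ {x | α < ‖u x‖} ≤
      (1 - (ENNReal.ofReal lam)⁻¹ ^ finrank ℝ E)⁻¹ *
        ∫⁻ x in ball 0 lam \ ball 0 1, ENNReal.ofReal ‖u x‖ ^ finrank ℝ E ∂μ := by
  rw [← lintegral_zpowLayerSum μ hlam hmeas hu hα,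
    ← lintegral_const_mul _ (hmeas.norm.ennreal_ofReal.pow_const _)]
  exact lintegral_mono fun x => zpowLayerSum_le hlam hα _ _

lemma lintegral_annulus_le (hlam : 1 < lam) (hmeas : Measurable u)
    (hu : IsDiscretelySelfSimilar μ lam u) :
    ∫⁻ x in ball 0 lam \ ball 0 1, ENNReal.ofReal ‖u x‖ ^ finrank ℝ E ∂μ ≤
      ENNReal.ofReal lam ^ finrank ℝ E * μ {x | 1 < ‖u x‖} := by
  calc ∫⁻ x in ball 0 lam \ ball 0 1, ENNReal.ofReal ‖u x‖ ^ finrank ℝ E ∂μ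
      ≤ ∫⁻ x in ball 0 lam \ ball 0 1,
          ENNReal.ofReal lam ^ finrank ℝ E * zpowLayerSum lam 1 (finrank ℝ E) ‖u x‖ ∂μ :=
        lintegral_mono fun x => ofReal_pow_le_zpowLayerSum hlam one_pos finrank_pos.ne' _
    _ = ENNReal.ofReal lam ^ finrank ℝ E * μ {x | 1 < ‖u x‖} := by
        rw [lintegral_const_mul' _ _ (by finiteness),
          lintegral_zpowLayerSum μ hlam hmeas hu one_pos, ENNReal.ofReal_one, one_pow, one_mul]

end SelfSimilar

lemma weakL3Norm_pow_three (f : EuclideanSpace ℝ (Fin 3) → EuclideanSpace ℝ (Fin 3)) :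
    weakL3Norm f ^ 3 = ⨆ (α : ℝ) (_ : 0 < α), ENNReal.ofReal α ^ 3 * volume {x | α < ‖f x‖} := by
  have hcube (a : ℝ≥0∞) : (a ^ ((1 : ℝ) / 3)) ^ 3 = a := by
    simpa using ENNReal.rpow_inv_natCast_pow three_ne_zero a
  simp only [weakL3Norm, ENNReal.iSup₂_pow_of_ne_zero _ three_ne_zero, mul_pow, hcube]

lemma ofReal_pow_mul_volume_le_weakL3Norm_pow
    (f : EuclideanSpace ℝ (Fin 3) → EuclideanSpace ℝ (Fin 3)) {α : ℝ} (hα : 0 < α) :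
    ENNReal.ofReal α ^ 3 * volume {x | α < ‖f x‖} ≤ weakL3Norm f ^ 3 := by
  rw [weakL3Norm_pow_three]
  exact le_iSup₂_of_le α hα le_rfl

/-- **Weak-`L³` control of a discretely self-similar field by its `L³` norm on a fundamental
annulus.** If `λ > 1` and `u₀ : ℝ³ → ℝ³` is λ-DSS, i.e. `u₀(x) = λ u₀(λ x)` a.e., then
`‖u₀‖³_{L^{3,∞}} ≤ (λ³/(3(λ-1))) ∫_{1 ≤ |x| ≤ λ} |u₀|³ dx`. In particular, a λ-DSS field
is in `L^{3,∞}(ℝ³)` if and only if it is in `L³` of the annulus `{1 ≤ |x| ≤ λ}`. -/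
theorem dss_weakL3_le_annulus_L3
    (lam : ℝ) (hlam : 1 < lam)
    (u₀ : EuclideanSpace ℝ (Fin 3) → EuclideanSpace ℝ (Fin 3)) (hu : Measurable u₀)
    (hdss : ∀ᵐ x : EuclideanSpace ℝ (Fin 3), u₀ x = lam • u₀ (lam • x)) :
    (weakL3Norm u₀ ^ 3 ≤
      ENNReal.ofReal (lam ^ 3 / (3 * (lam - 1))) *
        ∫⁻ x in {x : EuclideanSpace ℝ (Fin 3) | 1 ≤ ‖x‖ ∧ ‖x‖ ≤ lam},
          ENNReal.ofReal ‖u₀ x‖ ^ 3) ∧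
    (weakL3Norm u₀ < ∞ ↔
      (∫⁻ x in {x : EuclideanSpace ℝ (Fin 3) | 1 ≤ ‖x‖ ∧ ‖x‖ ≤ lam},
          ENNReal.ofReal ‖u₀ x‖ ^ 3) < ∞) := by
  have hlam3 : (1 - (ENNReal.ofReal lam)⁻¹ ^ 3)⁻¹ ≤ ENNReal.ofReal (lam ^ 3 / (3 * (lam - 1))) := by
    simpa using one_sub_inv_pow_inv_le hlam three_ne_zero
  rw [setLIntegral_congr (setOf_le_norm_le_ae_eq volume 1 lam)]
  have hupper : weakL3Norm u₀ ^ 3 ≤ ENNReal.ofReal (lam ^ 3 / (3 * (lam - 1))) *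
      ∫⁻ x in ball 0 lam \ ball 0 1, ENNReal.ofReal ‖u₀ x‖ ^ 3 := by
    rw [weakL3Norm_pow_three]
    refine iSup₂_le fun α hα => ?_
    have h := ofReal_pow_mul_measure_le_lintegral_annulus volume hlam hu hdss hα
    rw [finrank_euclideanSpace_fin] at h
    exact h.trans (by gcongr)
  have hlower : ∫⁻ x in ball 0 lam \ ball 0 1, ENNReal.ofReal ‖u₀ x‖ ^ 3
      ≤ ENNReal.ofReal lam ^ 3 * weakL3Norm u₀ ^ 3 := by
    have h := lintegral_annulus_le volume hlam hu hdss
    rw [finrank_euclideanSpace_fin] at h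
    exact h.trans (by gcongr; simpa using ofReal_pow_mul_volume_le_weakL3Norm_pow u₀ one_pos)
  refine ⟨hupper, fun h => hlower.trans_lt (by finiteness), fun h => ?_⟩
  exact (ENNReal.pow_lt_top_iff.1 (hupper.trans_lt (by finiteness))).resolve_right three_ne_zero
end
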